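/- Let α > 0, X a complex Banach space, and T a (C,α)-bounded operator on X. Then there exists a constant C > 0 such that ‖T^n‖ ≤ C n^α for all n ≥ 1; in particular ‖T^n‖ = O(n^α) as n → ∞. -/

import Mathlib

set_option maxRecDepth 8000


open scoped BigOperators

/-- The Cesàro kernel `k^α(n) = α(α+1)⋯(α+n−1)/n!`, with `k^α(0) = 1`. -/
noncomputable def cesaroKernel (α : ℝ) (n : ℕ) : ℝ :=
  (∏ i ∈ Finset.range n, (α + i)) / (Nat.factorial n)

/-- The Cesàro sum of order `α` of an operator `T`:
`Δ^{−α}𝒯(n) = ∑_{j=0}^{n} k^α(n−j) T^j`. -/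
noncomputable def cesaroSum {X : Type*} [NormedAddCommGroup X] [NormedSpace ℂ X]
    (α : ℝ) (T : X →L[ℂ] X) (n : ℕ) : X →L[ℂ] X :=
  ∑ j ∈ Finset.range (n + 1), (cesaroKernel α (n - j) : ℂ) • T ^ j

/-- The Cesàro mean of order `α` of an operator `T`:
`M_T^α(n) = Δ^{−α}𝒯(n) / k^{α+1}(n)`. -/
noncomputable def cesaroMean {X : Type*} [NormedAddCommGroup X] [NormedSpace ℂ X]
    (α : ℝ) (T : X →L[ℂ] X) (n : ℕ) : X →L[ℂ] X :=
  ((cesaroKernel (α + 1) n : ℂ))⁻¹ • cesaroSum α T n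


lemma cesaroKernel_zero (α : ℝ) : cesaroKernel α 0 = 1 := by simp [cesaroKernel]

lemma cesaroKernel_succ_mul (α : ℝ) (n : ℕ) :
    ((n : ℝ) + 1) * cesaroKernel α (n + 1) = (α + n) * cesaroKernel α n := by
  have h1 : ((Nat.factorial n : ℝ)) ≠ 0 := by positivity
  have h2 : ((n : ℝ) + 1) ≠ 0 := by positivity
  simp only [cesaroKernel, Finset.prod_range_succ, Nat.factorial_succ, Nat.cast_mul]
  push_cast
  field_simp

lemma cesaroKernel_succ (α : ℝ) (n : ℕ) :
    cesaroKernel α (n + 1) = cesaroKernel α n * ((α + n) / (n + 1)) := by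
  have h2 : ((n : ℝ) + 1) ≠ 0 := by positivity
  field_simp
  linear_combination cesaroKernel_succ_mul α n

lemma cesaroKernel_one (n : ℕ) : cesaroKernel 1 n = 1 := by
  induction n with
  | zero => simp [cesaroKernel]
  | succ m ih =>
    rw [cesaroKernel_succ, ih]
    have h : ((m : ℝ) + 1) ≠ 0 := by positivity
    field_simp
    ring

lemma cesaroKernel_pos {α : ℝ} (hα : 0 < α) (n : ℕ) : 0 < cesaroKernel α n := by
  induction n with
  | zero => simp [cesaroKernel]
  | succ m ih =>
    rw [cesaroKernel_succ]
    have : (0:ℝ) < α + m := by positivity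
    positivity

lemma cesaroKernel_conv (a b : ℝ) (m : ℕ) :
    ∑ i ∈ Finset.range (m + 1), cesaroKernel a i * cesaroKernel b (m - i)
      = cesaroKernel (a + b) m := by
  induction m with
  | zero => simp [cesaroKernel]
  | succ m ih =>
    have hm1 : ((m : ℝ) + 1) ≠ 0 := by positivity
    refine mul_left_cancel₀ hm1 ?_
    rw [cesaroKernel_succ_mul, ← ih, Finset.mul_sum, Finset.mul_sum]
    have split : ∀ i ∈ Finset.range (m + 2),
        ((m : ℝ) + 1) * (cesaroKernel a i * cesaroKernel b (m + 1 - i))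
        = (i : ℝ) * (cesaroKernel a i * cesaroKernel b (m + 1 - i))
          + ((m + 1 - i : ℕ) : ℝ) * (cesaroKernel a i * cesaroKernel b (m + 1 - i)) := by
      intro i hi
      rw [Finset.mem_range] at hi
      have h : ((i : ℝ)) + ((m + 1 - i : ℕ) : ℝ) = (m : ℝ) + 1 := by
        rw [Nat.cast_sub (by omega : i ≤ m + 1)]; push_cast; ring
      rw [← h]; ring
    rw [Finset.sum_congr rfl split, Finset.sum_add_distrib]
    have S1 : ∑ i ∈ Finset.range (m + 2),
        (i : ℝ) * (cesaroKernel a i * cesaroKernel b (m + 1 - i))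
        = ∑ i ∈ Finset.range (m + 1), (a + i) * cesaroKernel a i * cesaroKernel b (m - i) := by
      rw [Finset.sum_range_succ'
        (fun i => (i : ℝ) * (cesaroKernel a i * cesaroKernel b (m + 1 - i)))]
      rw [show ((0:ℕ) : ℝ) * (cesaroKernel a 0 * cesaroKernel b (m + 1 - 0)) = 0 by
        simp]
      rw [add_zero]
      refine Finset.sum_congr rfl fun i hi => ?_
      rw [Nat.succ_sub_succ]
      push_cast
      linear_combination cesaroKernel b (m - i) * cesaroKernel_succ_mul a i
    have S2 : ∑ i ∈ Finset.range (m + 2),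
        ((m + 1 - i : ℕ) : ℝ) * (cesaroKernel a i * cesaroKernel b (m + 1 - i))
        = ∑ i ∈ Finset.range (m + 1),
            (b + ((m - i : ℕ) : ℝ)) * cesaroKernel a i * cesaroKernel b (m - i) := by
      rw [Finset.sum_range_succ]
      rw [show ((m + 1 - (m + 1) : ℕ) : ℝ) *
          (cesaroKernel a (m + 1) * cesaroKernel b (m + 1 - (m + 1))) = 0 by simp]
      rw [add_zero]
      refine Finset.sum_congr rfl fun i hi => ?_
      rw [Finset.mem_range] at hi
      have h : m + 1 - i = (m - i) + 1 := by omega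
      rw [h]
      push_cast
      linear_combination cesaroKernel a i * cesaroKernel_succ_mul b (m - i)
    rw [S1, S2, ← Finset.sum_add_distrib]
    refine Finset.sum_congr rfl fun i hi => ?_
    rw [Finset.mem_range] at hi
    have h : ((i : ℝ)) + ((m - i : ℕ) : ℝ) = (m : ℝ) := by
      rw [Nat.cast_sub (by omega : i ≤ m)]; push_cast; ring
    linear_combination (cesaroKernel a i * cesaroKernel b (m - i)) * h

lemma cesaroKernel_sum (β : ℝ) (m : ℕ) :
    ∑ i ∈ Finset.range (m + 1), cesaroKernel β i = cesaroKernel (β + 1) m := by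
  rw [← cesaroKernel_conv β 1 m]
  simp [cesaroKernel_one]

lemma cesaroKernel_zero_succ (n : ℕ) : cesaroKernel 0 (n + 1) = 0 := by
  have : (∏ i ∈ Finset.range (n + 1), ((0:ℝ) + i)) = 0 := by
    apply Finset.prod_eq_zero (Finset.mem_range.mpr (Nat.succ_pos n))
    simp
  simp only [cesaroKernel]
  rw [show (∏ i ∈ Finset.range (n + 1), ((0:ℝ) + i)) = 0 from this]
  simp

section Op
variable {X : Type*} [NormedAddCommGroup X] [NormedSpace ℂ X]

lemma cesaro_key (α : ℝ) (T : X →L[ℂ] X) (n : ℕ) :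
    ∑ j ∈ Finset.range (n + 1), (cesaroKernel (-α) (n - j) : ℂ) • cesaroSum α T j
      = T ^ n := by
  simp only [cesaroSum, Finset.smul_sum, smul_smul]
  have recast : ∀ j l : ℕ, (cesaroKernel (-α) (n - j) : ℂ) * (cesaroKernel α (j - l) : ℂ)
      = ((cesaroKernel (-α) (n - j) * cesaroKernel α (j - l) : ℝ) : ℂ) := by
    intro j l; push_cast; ring
  simp only [recast]
  have hswap :
      ∑ j ∈ Finset.range (n + 1), ∑ l ∈ Finset.range (j + 1),
        ((cesaroKernel (-α) (n - j) * cesaroKernel α (j - l) : ℝ) : ℂ) • T ^ l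
      = ∑ l ∈ Finset.range (n + 1), ∑ j ∈ Finset.Ico l (n + 1),
        ((cesaroKernel (-α) (n - j) * cesaroKernel α (j - l) : ℝ) : ℂ) • T ^ l := by
    simp only [Finset.range_eq_Ico]
    rw [Finset.sum_Ico_Ico_comm 0 (n + 1)
      (fun l j => ((cesaroKernel (-α) (n - j) * cesaroKernel α (j - l) : ℝ) : ℂ) • T ^ l)]
  rw [hswap]
  have inner : ∀ l ∈ Finset.range (n + 1),
      ∑ j ∈ Finset.Ico l (n + 1),
        ((cesaroKernel (-α) (n - j) * cesaroKernel α (j - l) : ℝ) : ℂ) • T ^ l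
      = ((cesaroKernel 0 (n - l) : ℝ) : ℂ) • T ^ l := by
    intro l hl
    rw [Finset.mem_range] at hl
    rw [← Finset.sum_smul, Finset.sum_Ico_eq_sum_range]
    have hnl : n + 1 - l = (n - l) + 1 := by omega
    rw [hnl]
    have : ∀ i ∈ Finset.range ((n - l) + 1),
        ((cesaroKernel (-α) (n - (l + i)) * cesaroKernel α ((l + i) - l) : ℝ) : ℂ)
        = ((cesaroKernel α i * cesaroKernel (-α) ((n - l) - i) : ℝ) : ℂ) := by
      intro i hi
      have h1 : n - (l + i) = (n - l) - i := by omega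
      have h2 : (l + i) - l = i := by omega
      rw [h1, h2, mul_comm]
    rw [Finset.sum_congr rfl this, ← Complex.ofReal_sum, cesaroKernel_conv α (-α) (n - l)]
    norm_num
  rw [Finset.sum_congr rfl inner]
  have hz : ∀ l ∈ Finset.range (n + 1), l ≠ n →
      ((cesaroKernel 0 (n - l) : ℝ) : ℂ) • T ^ l = 0 := by
    intro l hl hne
    rw [Finset.mem_range] at hl
    have h : n - l = (n - l - 1) + 1 := by omega
    rw [h, cesaroKernel_zero_succ]
    simp
  rw [Finset.sum_eq_single_of_mem n (Finset.self_mem_range_succ n) hz]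
  simp [cesaroKernel_zero]

end Op

lemma cesaroKernel_upper {α : ℝ} (hα : 0 < α) (n : ℕ) (hn : 1 ≤ n) :
    cesaroKernel (α + 1) n ≤ Real.exp α * (n : ℝ) ^ α := by
  have hfac : ((Nat.factorial n : ℝ)) = ∏ i ∈ Finset.range n, ((i : ℝ) + 1) := by
    rw [← Finset.prod_range_add_one_eq_factorial]
    push_cast; rfl
  have hprod : cesaroKernel (α + 1) n = ∏ i ∈ Finset.range n, ((α + 1 + i) / ((i : ℝ) + 1)) := by
    rw [cesaroKernel, hfac, ← Finset.prod_div_distrib]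
  have hbound : cesaroKernel (α + 1) n ≤ ∏ i ∈ Finset.range n, Real.exp (α / ((i : ℝ) + 1)) := by
    rw [hprod]
    apply Finset.prod_le_prod
    · intro i _; positivity
    · intro i _
      have hi : (0:ℝ) < (i : ℝ) + 1 := by positivity
      rw [div_le_iff₀ hi] at *
      calc α + 1 + i = (α / ((i:ℝ)+1)) * ((i:ℝ)+1) + 1 * ((i:ℝ)+1) := by field_simp; ring
        _ ≤ Real.exp (α / ((i:ℝ)+1)) * ((i:ℝ)+1) := by
            rw [← add_mul]
            apply mul_le_mul_of_nonneg_right _ hi.le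
            have := Real.add_one_le_exp (α / ((i:ℝ)+1))
            linarith
  rw [← Real.exp_sum] at hbound
  have hsum : ∑ i ∈ Finset.range n, α / ((i : ℝ) + 1) = α * (harmonic n : ℝ) := by
    rw [harmonic]
    push_cast
    rw [Finset.mul_sum]
    refine Finset.sum_congr rfl fun i _ => ?_
    rw [div_eq_mul_inv]
  have hharm : (harmonic n : ℝ) ≤ 1 + Real.log n := harmonic_le_one_add_log n
  have hle2 : Real.exp (∑ i ∈ Finset.range n, α / ((i : ℝ) + 1))
      ≤ Real.exp (α * (1 + Real.log n)) := by
    apply Real.exp_le_exp.mpr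
    rw [hsum]
    exact mul_le_mul_of_nonneg_left hharm hα.le
  have hnpos : (0:ℝ) < n := by exact_mod_cast hn
  have hrw : Real.exp (α * (1 + Real.log n)) = Real.exp α * (n : ℝ) ^ α := by
    rw [mul_add, Real.exp_add, mul_one, Real.rpow_def_of_pos hnpos, mul_comm α (Real.log n)]
  calc cesaroKernel (α + 1) n ≤ _ := hbound
    _ ≤ _ := hle2
    _ ≤ _ := le_of_eq hrw

lemma cesaroKernel_neg_step {α : ℝ} (hα : 0 < α) {t : ℕ} (ht : α ≤ (t : ℝ) + 1) :
    |cesaroKernel (-α) (t + 1)|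
      = |cesaroKernel (-α + 1) t| - |cesaroKernel (-α + 1) (t + 1)| := by
  have e0 : cesaroKernel (-α) (t + 1)
      = cesaroKernel (-α + 1) (t + 1) - cesaroKernel (-α + 1) t := by
    have h1 := cesaroKernel_sum (-α) (t + 1)
    have h2 := cesaroKernel_sum (-α) t
    rw [Finset.sum_range_succ, h2] at h1
    linarith
  set c := (-α + 1 + (t : ℝ)) / ((t : ℝ) + 1) with hc
  have hc0 : 0 ≤ c := by
    apply div_nonneg _ (by positivity)
    linarith
  have hc1 : c ≤ 1 := by
    rw [div_le_one (by positivity)]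
    linarith
  have e1 : cesaroKernel (-α + 1) (t + 1) = cesaroKernel (-α + 1) t * c :=
    cesaroKernel_succ _ _
  rw [e0, e1, show cesaroKernel (-α + 1) t * c - cesaroKernel (-α + 1) t
      = cesaroKernel (-α + 1) t * (c - 1) by ring]
  rw [abs_mul, abs_mul, abs_of_nonneg hc0, abs_of_nonpos (by linarith : c - 1 ≤ 0)]
  ring

lemma cesaroKernel_abs_sum {α : ℝ} (hα : 0 < α) :
    ∃ S : ℝ, 0 ≤ S ∧ ∀ n : ℕ,
      ∑ m ∈ Finset.range (n + 1), |cesaroKernel (-α) m| ≤ S := by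
  set M := ⌈α⌉₊ with hMdef
  refine ⟨(∑ m ∈ Finset.range (M + 1), |cesaroKernel (-α) m|) + |cesaroKernel (-α + 1) M|,
    by positivity, fun n => ?_⟩
  by_cases hn : n ≤ M
  · have hsub : Finset.range (n + 1) ⊆ Finset.range (M + 1) :=
      Finset.range_subset_range.mpr (by omega)
    have h1 := Finset.sum_le_sum_of_subset_of_nonneg (f := fun m => |cesaroKernel (-α) m|)
      hsub (fun i _ _ => abs_nonneg _)
    have h2 : (0:ℝ) ≤ |cesaroKernel (-α + 1) M| := abs_nonneg _
    linarith
  · push_neg at hn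
    rw [← Finset.sum_range_add_sum_Ico _ (show M + 1 ≤ n + 1 by omega)]
    have htail : ∑ m ∈ Finset.Ico (M + 1) (n + 1), |cesaroKernel (-α) m|
        ≤ |cesaroKernel (-α + 1) M| := by
      rw [Finset.sum_Ico_eq_sum_range]
      have hlen : n + 1 - (M + 1) = n - M := by omega
      rw [hlen]
      have hterm : ∀ i ∈ Finset.range (n - M), |cesaroKernel (-α) (M + 1 + i)|
          = (fun i => |cesaroKernel (-α + 1) (M + i)|) i
            - (fun i => |cesaroKernel (-α + 1) (M + i)|) (i + 1) := by
        intro i _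
        have htM : α ≤ ((M + i : ℕ) : ℝ) + 1 := by
          have h : α ≤ (M : ℝ) := Nat.le_ceil α
          push_cast
          linarith
        have := cesaroKernel_neg_step hα (t := M + i) htM
        rw [show M + 1 + i = (M + i) + 1 by omega]
        simpa [← add_assoc] using this
      rw [Finset.sum_congr rfl hterm,
        Finset.sum_range_sub' (fun i => |cesaroKernel (-α + 1) (M + i)|) (n - M)]
      simp only [add_zero]
      have := abs_nonneg (cesaroKernel (-α + 1) (M + (n - M)))
      linarith
    exact add_le_add le_rfl htail

/-- If `α > 0` and `T` is `(C,α)`-bounded, then there exists `C > 0` such that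
`‖T^n‖ ≤ C n^α` for all `n ≥ 1`; in particular `‖T^n‖ = O(n^α)`. -/
theorem cesaro_bounded_power_growth
    {X : Type*} [NormedAddCommGroup X] [NormedSpace ℂ X] [CompleteSpace X]
    (α : ℝ) (hα : 0 < α) (T : X →L[ℂ] X)
    (hT : ∃ C : ℝ, ∀ n : ℕ, ‖cesaroMean α T n‖ ≤ C) :
    ∃ C : ℝ, 0 < C ∧ ∀ n : ℕ, 1 ≤ n → ‖T ^ n‖ ≤ C * (n : ℝ) ^ α := by
  obtain ⟨C0, hC0⟩ := hT
  have hC00 : 0 ≤ C0 := le_trans (norm_nonneg _) (hC0 0)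
  obtain ⟨S, hS0, hS⟩ := cesaroKernel_abs_sum hα
  refine ⟨Real.exp α * C0 * S + 1, by positivity, fun n hn => ?_⟩
  have hn1 : (1:ℝ) ≤ (n:ℝ) := by exact_mod_cast hn
  have hnpow : (1:ℝ) ≤ (n:ℝ) ^ α := Real.one_le_rpow hn1 hα.le
  have hnpow0 : (0:ℝ) ≤ (n:ℝ) ^ α := by linarith
  have hsumb : ∀ j ∈ Finset.range (n + 1),
      ‖cesaroSum α T j‖ ≤ Real.exp α * (n:ℝ) ^ α * C0 := by
    intro j hj
    rw [Finset.mem_range] at hj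
    have hk : 0 < cesaroKernel (α + 1) j := cesaroKernel_pos (by linarith) j
    have hks : cesaroSum α T j = (cesaroKernel (α + 1) j : ℂ) • cesaroMean α T j := by
      rw [cesaroMean, smul_smul, mul_inv_cancel₀, one_smul]
      exact_mod_cast hk.ne'
    have h1 : ‖cesaroSum α T j‖ ≤ cesaroKernel (α + 1) j * C0 := by
      rw [hks]
      have he : ‖((cesaroKernel (α + 1) j : ℝ) : ℂ) • cesaroMean α T j‖
          = ‖((cesaroKernel (α + 1) j : ℝ) : ℂ)‖ * ‖cesaroMean α T j‖ :=
        norm_smul ((cesaroKernel (α + 1) j : ℝ) : ℂ) (cesaroMean α T j)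
      rw [he, Complex.norm_real, Real.norm_eq_abs, abs_of_pos hk]
      exact mul_le_mul_of_nonneg_left (hC0 j) hk.le
    have h2 : cesaroKernel (α + 1) j ≤ Real.exp α * (n:ℝ) ^ α := by
      rcases Nat.eq_zero_or_pos j with hj0 | hj1
      · subst hj0
        rw [cesaroKernel_zero]
        have : (1:ℝ) ≤ Real.exp α := Real.one_le_exp hα.le
        nlinarith
      · calc cesaroKernel (α + 1) j ≤ Real.exp α * (j:ℝ) ^ α := cesaroKernel_upper hα j hj1
          _ ≤ Real.exp α * (n:ℝ) ^ α := by
            apply mul_le_mul_of_nonneg_left _ (Real.exp_nonneg α)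
            apply Real.rpow_le_rpow (by positivity) (by exact_mod_cast Nat.lt_succ_iff.mp hj) hα.le
    calc ‖cesaroSum α T j‖ ≤ cesaroKernel (α + 1) j * C0 := h1
      _ ≤ Real.exp α * (n:ℝ) ^ α * C0 := mul_le_mul_of_nonneg_right h2 hC00
  rw [← cesaro_key α T n]
  have hre : ∑ j ∈ Finset.range (n + 1), |cesaroKernel (-α) (n - j)|
      = ∑ m ∈ Finset.range (n + 1), |cesaroKernel (-α) m| := by
    rw [← Finset.sum_range_reflect (fun m => |cesaroKernel (-α) m|) (n + 1)]
    simp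
  calc ‖∑ j ∈ Finset.range (n + 1), (cesaroKernel (-α) (n - j) : ℂ) • cesaroSum α T j‖
      ≤ ∑ j ∈ Finset.range (n + 1), ‖(cesaroKernel (-α) (n - j) : ℂ) • cesaroSum α T j‖ :=
        norm_sum_le _ _
    _ ≤ ∑ j ∈ Finset.range (n + 1),
          |cesaroKernel (-α) (n - j)| * (Real.exp α * (n:ℝ) ^ α * C0) := by
        apply Finset.sum_le_sum
        intro j hj
        have he : ‖((cesaroKernel (-α) (n - j) : ℝ) : ℂ) • cesaroSum α T j‖
            = ‖((cesaroKernel (-α) (n - j) : ℝ) : ℂ)‖ * ‖cesaroSum α T j‖ :=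
          norm_smul ((cesaroKernel (-α) (n - j) : ℝ) : ℂ) (cesaroSum α T j)
        rw [he, Complex.norm_real, Real.norm_eq_abs]
        exact mul_le_mul_of_nonneg_left (hsumb j hj) (abs_nonneg _)
    _ = (∑ j ∈ Finset.range (n + 1), |cesaroKernel (-α) (n - j)|)
          * (Real.exp α * (n:ℝ) ^ α * C0) := by rw [Finset.sum_mul]
    _ ≤ S * (Real.exp α * (n:ℝ) ^ α * C0) := by
        rw [hre]
        exact mul_le_mul_of_nonneg_right (hS n) (by positivity)
    _ ≤ (Real.exp α * C0 * S + 1) * (n:ℝ) ^ α := by nlinarith [Real.exp_nonneg α]
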